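/- arXiv:2206.00821 — 2 statements merged into one kernel-verified Lean document; each statement's English description precedes it below -/
import Mathlib

section
/- Suppose g, h: ℝ × [0,∞) → ℝ satisfy: for each fixed u, t ↦ g(u,t) and t ↦ h(u,t) are monotone increasing; g(u,t) ≥ 0 whenever t·f₁(u) ≥ c·f₂(u); and h(u,t) ≤ 0 whenever t·f₂(u) < c·f₁(u), where f₁, f₂ ≥ 0 and c ≥ 0 are fixed. Then t ↦ ∫ [1_{t·f₁(u) ≥ c·f₂(u)}·g(u,t) + 1_{t·f₂(u) < c·f₁(u)}·h(u,t)] du is monotone increasing, provided the integrals exist. -/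
open MeasureTheory

/-- Monotonicity propagation step: if `g(u,·)` and `h(u,·)` are monotone
increasing on `[0,∞)`, `g(u,t) ≥ 0` whenever `t·f₁(u) ≥ c·f₂(u)`, and
`h(u,t) ≤ 0` whenever `t·f₂(u) < c·f₁(u)` (with `f₁, f₂ ≥ 0`, `c ≥ 0` fixed),
then `t ↦ ∫ [1_{t·f₁(u) ≥ c·f₂(u)}·g(u,t) + 1_{t·f₂(u) < c·f₁(u)}·h(u,t)] du`
is monotone increasing on `[0,∞)`, provided the integrands are integrable. -/
theorem indicator_integral_monotone (f₁ f₂ : ℝ → ℝ) (c : ℝ) (hc : 0 ≤ c)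
    (G H : ℝ → ℝ → ℝ)
    (hGmono : ∀ u : ℝ, MonotoneOn (fun t => G u t) (Set.Ici 0))
    (hHmono : ∀ u : ℝ, MonotoneOn (fun t => H u t) (Set.Ici 0))
    (hf₁ : ∀ u, 0 ≤ f₁ u) (hf₂ : ∀ u, 0 ≤ f₂ u)
    (hGpos : ∀ u : ℝ, ∀ t : ℝ, 0 ≤ t → c * f₂ u ≤ t * f₁ u → 0 ≤ G u t)
    (hHneg : ∀ u : ℝ, ∀ t : ℝ, 0 ≤ t → t * f₂ u < c * f₁ u → H u t ≤ 0)
    (hint : ∀ t : ℝ, 0 ≤ t →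
      Integrable (fun u =>
        (if c * f₂ u ≤ t * f₁ u then G u t else 0) +
          (if t * f₂ u < c * f₁ u then H u t else 0))) :
    MonotoneOn
      (fun t =>
        ∫ u, ((if c * f₂ u ≤ t * f₁ u then G u t else 0) +
          (if t * f₂ u < c * f₁ u then H u t else 0)))
      (Set.Ici 0) := by
  intro s hs t ht hst
  simp only [Set.mem_Ici] at hs ht
  apply integral_mono (hint s hs) (hint t ht)
  intro u
  have hmul : s * f₁ u ≤ t * f₁ u := mul_le_mul_of_nonneg_right hst (hf₁ u)
  have hmul2 : s * f₂ u ≤ t * f₂ u := mul_le_mul_of_nonneg_right hst (hf₂ u)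
  apply add_le_add
  · by_cases h1 : c * f₂ u ≤ s * f₁ u
    · have h2 : c * f₂ u ≤ t * f₁ u := h1.trans hmul
      simp only [if_pos h1, if_pos h2]
      exact hGmono u hs ht hst
    · simp only [if_neg h1]
      by_cases h2 : c * f₂ u ≤ t * f₁ u
      · simpa [h2] using hGpos u t ht h2
      · simp [h2]
  · by_cases h2 : t * f₂ u < c * f₁ u
    · have h1 : s * f₂ u < c * f₁ u := lt_of_le_of_lt hmul2 h2
      simp only [if_pos h1, if_pos h2]
      exact hHmono u hs ht hst
    · simp only [if_neg h2]
      by_cases h1 : s * f₂ u < c * f₁ u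
      · simpa [h1] using hHneg u s hs h1
      · simp [h1]
end

section
/- Let Δₙ₊₁ be defined from Δₙ via the recursion Δₙ₊₁(x, ξ) = ∫ 1_{ξf₁(u) ≥ (1-ξ)f₂(u)}·Δₙ(x+u, p_X(ξ,u))·m_ξ(u) du + ∫ 1_{ξf₂(u) < (1-ξ)f₁(u)}·Δₙ(x+u, p_Y(ξ,u))·m'_ξ(u) du, with p_X, p_Y, m_ξ, m'_ξ the posterior and marginal formulas. If Δₙ satisfies Δₙ(y, η) = -Δₙ(y, 1-η) for all y, η, then Δₙ₊₁(x, ξ) = -Δₙ₊₁(x, 1-ξ) for all x, ξ. -/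
open MeasureTheory

/-! Writing `a = ξ f₁(u)` and `b = (1 - ξ) f₂(u)`, replacing `ξ` by `1 - ξ` swaps the roles of `a`
and `b` between the two integrands (and likewise for `a = (1 - ξ) f₁(u)`, `b = ξ f₂(u)`). So it
suffices that `1_{b ≤ a} Δ(a / (a + b)) (a + b) = -1_{b < a} Δ(b / (b + a)) (b + a)` pointwise:
for `b < a` this is the antisymmetry of `Δ` at `a / (a + b)`, and on the tie `a = b` the left side
vanishes because an antisymmetric `Δ` vanishes at `1/2`. -/

section Antisymmetric

variable {D : ℝ → ℝ}

lemma apply_half_eq_zero_of_antisymm (hD : ∀ η ∈ Set.Icc (0 : ℝ) 1, D η = -D (1 - η)) :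
    D (1 / 2) = 0 := by
  have h := hD (1 / 2) (by norm_num)
  norm_num at h
  linarith

lemma ite_le_mul_eq_neg_ite_lt (hD : ∀ η ∈ Set.Icc (0 : ℝ) 1, D η = -D (1 - η))
    {a b : ℝ} (ha : 0 ≤ a) (hb : 0 ≤ b) :
    (if b ≤ a then D (a / (a + b)) * (a + b) else 0) =
      -(if b < a then D (b / (b + a)) * (b + a) else 0) := by
  rcases lt_trichotomy b a with hlt | rfl | hgt
  · have hpos : 0 < a + b := by linarith
    have hmem : a / (a + b) ∈ Set.Icc (0 : ℝ) 1 :=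
      ⟨by positivity, (div_le_one hpos).mpr (by linarith)⟩
    have hcompl : 1 - a / (a + b) = b / (b + a) := by
      rw [add_comm b a, eq_div_iff hpos.ne', sub_mul, div_mul_cancel₀ a hpos.ne']
      ring
    rw [if_pos hlt.le, if_pos hlt, hD _ hmem, hcompl, add_comm a b]
    ring
  · rw [if_pos le_rfl, if_neg (lt_irrefl b), neg_zero]
    rcases eq_or_ne b 0 with rfl | hb0
    · simp
    · rw [show b / (b + b) = 1 / 2 by field_simp; ring, apply_half_eq_zero_of_antisymm hD,
        zero_mul]
  · rw [if_neg (not_le.mpr hgt), if_neg (not_lt.mpr hgt.le), neg_zero]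

end Antisymmetric

theorem delta_antisymmetry_propagates_general (f₁ f₂ : ℝ → ℝ)
    (hf₁ : ∀ u, 0 ≤ f₁ u) (hf₂ : ∀ u, 0 ≤ f₂ u)
    (Δn Δn1 : ℝ → ℝ → ℝ)
    (hrec : ∀ (x : ℝ), ∀ ξ ∈ Set.Icc (0 : ℝ) 1,
      Δn1 x ξ =
        (∫ u, (if (1 - ξ) * f₂ u ≤ ξ * f₁ u then
            Δn (x + u) (ξ * f₁ u / (ξ * f₁ u + (1 - ξ) * f₂ u)) *
              (ξ * f₁ u + (1 - ξ) * f₂ u) else 0)) +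
        ∫ u, (if ξ * f₂ u < (1 - ξ) * f₁ u then
            Δn (x + u) (ξ * f₂ u / (ξ * f₂ u + (1 - ξ) * f₁ u)) *
              (ξ * f₂ u + (1 - ξ) * f₁ u) else 0))
    (hanti : ∀ (y : ℝ), ∀ η ∈ Set.Icc (0 : ℝ) 1, Δn y η = -Δn y (1 - η)) :
    ∀ (x : ℝ), ∀ ξ ∈ Set.Icc (0 : ℝ) 1, Δn1 x ξ = -Δn1 x (1 - ξ) := by
  intro x ξ hξ
  have hξ₀ : 0 ≤ ξ := hξ.1
  have hξ₁ : 0 ≤ 1 - ξ := sub_nonneg.mpr hξ.2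
  rw [hrec x ξ hξ, hrec x (1 - ξ) ⟨hξ₁, sub_le_self 1 hξ₀⟩, sub_sub_cancel]
  have first := fun u ↦ ite_le_mul_eq_neg_ite_lt (hanti (x + u))
    (mul_nonneg hξ₀ (hf₁ u)) (mul_nonneg hξ₁ (hf₂ u))
  have second := fun u ↦ ite_le_mul_eq_neg_ite_lt (hanti (x + u))
    (mul_nonneg hξ₁ (hf₁ u)) (mul_nonneg hξ₀ (hf₂ u))
  simp_rw [first, second, integral_neg]
  ring

/-- The antisymmetry `Δₙ(y,η) = -Δₙ(y,1-η)` propagates through the recursion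
defining `Δₙ₊₁` from `Δₙ` via the posterior and marginal formulas. -/
theorem delta_antisymmetry_propagates (f₁ f₂ : ℝ → ℝ)
    (hf₁ : ∀ u, 0 ≤ f₁ u) (hf₂ : ∀ u, 0 ≤ f₂ u)
    (hden : ∀ ξ ∈ Set.Icc (0 : ℝ) 1, ∀ u : ℝ,
      0 < ξ * f₁ u + (1 - ξ) * f₂ u ∧ 0 < ξ * f₂ u + (1 - ξ) * f₁ u)
    (Δn Δn1 : ℝ → ℝ → ℝ)
    (hrec : ∀ (x : ℝ), ∀ ξ ∈ Set.Icc (0 : ℝ) 1,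
      Δn1 x ξ =
        (∫ u, (if (1 - ξ) * f₂ u ≤ ξ * f₁ u then
            Δn (x + u) (ξ * f₁ u / (ξ * f₁ u + (1 - ξ) * f₂ u)) *
              (ξ * f₁ u + (1 - ξ) * f₂ u) else 0)) +
        ∫ u, (if ξ * f₂ u < (1 - ξ) * f₁ u then
            Δn (x + u) (ξ * f₂ u / (ξ * f₂ u + (1 - ξ) * f₁ u)) *
              (ξ * f₂ u + (1 - ξ) * f₁ u) else 0))
    (hanti : ∀ (y : ℝ), ∀ η ∈ Set.Icc (0 : ℝ) 1, Δn y η = -Δn y (1 - η)) :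
    ∀ (x : ℝ), ∀ ξ ∈ Set.Icc (0 : ℝ) 1, Δn1 x ξ = -Δn1 x (1 - ξ) :=
  delta_antisymmetry_propagates_general f₁ f₂ hf₁ hf₂ Δn Δn1 hrec hanti
end
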